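/- arXiv:2310.10507 — 2 statements merged into one kernel-verified Lean document; each statement's English description precedes it below -/
import Mathlib

section
/- Let s ≥ 9 and let (d, m1, ..., ms) be real numbers satisfying: d² = m1² + ... + ms², 3d = m1 + ... + ms, m1 ≥ m2 ≥ ... ≥ ms ≥ 0, and d ≥ m1 + m2 + m3. Then d = 3m for some m ≥ 0, exactly nine of the mi equal m, and the remaining s - 9 equal 0 (i.e., (d, m1, ..., ms) = (3m, m, ..., m, 0, ..., 0) with nine m's). -/
lemma aux_sum_ite (s k : ℕ) (hk : k ≤ s) (t : ℝ) :
    ∑ i : Fin s, (if i.val < k then t else 0) = k * t := by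
  have hcard : (Finset.univ.filter fun i : Fin s => i.val < k).card = k := by
    have hset : Finset.univ.filter (fun i : Fin s => i.val < k)
        = Finset.map (Fin.castLEEmb hk) Finset.univ := by
      ext i
      simp only [Finset.mem_filter, Finset.mem_univ, true_and, Finset.mem_map,
        Fin.coe_castLEEmb]
      constructor
      · intro h
        exact ⟨⟨i.val, h⟩, Fin.ext rfl⟩
      · rintro ⟨a, rfl⟩
        exact a.isLt
    rw [hset, Finset.card_map, Finset.card_univ, Fintype.card_fin]
  rw [Finset.sum_ite, Finset.sum_const_zero, add_zero, Finset.sum_const, hcard,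
    nsmul_eq_mul]


lemma aux_key (t a b c Q R : ℝ) (ht : 0 < t) (hab : b ≤ a) (hbc : c ≤ b)
    (hc : 0 ≤ c) (hb : 0 ≤ b) (hred : a + b + c ≤ 3 * t)
    (hRQ : R ≤ c * Q) (e1 : Q = 9 * t - a - b) (e2 : R = 9 * t ^ 2 - a ^ 2 - b ^ 2)
    (hQc : c = 0 → Q ≤ 0) : a ≤ t := by
  by_contra hcon
  push_neg at hcon
  have hct : c ≤ t := by linarith
  have hA : (t - c) * Q ≤ a * (a - t) + b * (b - t) := by nlinarith [hRQ]
  have hB : a * (a - t) + b * (b - t) ≤ (a - t) * (a + b) := by nlinarith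
  have hm0b : a - t ≤ 2 * (t - c) := by linarith
  rcases eq_or_lt_of_le hct with hceq | hclt
  · linarith
  · have hPnn : 0 ≤ a + b := by linarith
    have hKey : (t - c) * (9 * t - (a + b)) ≤ 2 * (t - c) * (a + b) := by
      nlinarith [mul_le_mul_of_nonneg_right hm0b hPnn]
    have hP3 : 9 * t ≤ 3 * (a + b) := by
      by_contra hP
      push_neg at hP
      have hpos : 0 < (t - c) * (9 * t - 3 * (a + b)) :=
        mul_pos (sub_pos.2 hclt) (by linarith)
      nlinarith
    have hc0 : c = 0 := le_antisymm (by linarith) hc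
    have := hQc hc0
    linarith

/-- Classification: if s ≥ 9 and (d, m1, ..., ms) satisfies d² = Σmᵢ², 3d = Σmᵢ,
m1 ≥ ... ≥ ms ≥ 0 and d ≥ m1 + m2 + m3 (sum of the three largest multiplicities),
then (d, m) = (3c, c⁹, 0^{s-9}) for some c ≥ 0. -/
theorem stmt_3 (s : ℕ) (hs : 9 ≤ s) (d : ℝ) (m : Fin s → ℝ)
    (h1 : d ^ 2 = ∑ i, (m i) ^ 2) (h2 : 3 * d = ∑ i, m i)
    (hmono : ∀ i j : Fin s, i ≤ j → m j ≤ m i) (hnn : ∀ i, 0 ≤ m i)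
    (hred : m ⟨0, by omega⟩ + m ⟨1, by omega⟩ + m ⟨2, by omega⟩ ≤ d) :
    ∃ c : ℝ, 0 ≤ c ∧ d = 3 * c ∧ ∀ i : Fin s, m i = if i.val < 9 then c else 0 := by
  have h0s : 0 < s := by omega
  have h1s : 1 < s := by omega
  have h2s : 2 < s := by omega
  have h8s : 8 < s := by omega
  set i0 : Fin s := ⟨0, h0s⟩ with hi0
  set i1 : Fin s := ⟨1, h1s⟩ with hi1
  set i2 : Fin s := ⟨2, h2s⟩ with hi2
  have hred' : m i0 + m i1 + m i2 ≤ d := hred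
  have hd0 : 0 ≤ d := by
    have : (0:ℝ) ≤ ∑ i, m i := Finset.sum_nonneg fun i _ => hnn i
    linarith
  rcases eq_or_lt_of_le hd0 with hd | hd
  · -- d = 0
    refine ⟨0, le_refl 0, by linarith, ?_⟩
    have hsq : ∑ i, (m i)^2 = 0 := by rw [← h1, ← hd]; ring
    have hz := (Finset.sum_eq_zero_iff_of_nonneg (fun i _ => sq_nonneg (m i))).1 hsq
    intro i
    have hz' := hz i (Finset.mem_univ i)
    have : m i = 0 := by nlinarith [hz']
    simp [this]
  · -- d > 0
    set t : ℝ := d / 3 with ht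
    have htpos : 0 < t := by positivity
    have hd3 : d = 3 * t := by rw [ht]; ring
    -- splitting sums
    have hfilter : Finset.univ.filter (fun i : Fin s => i.val < 2) = {i0, i1} := by
      ext i
      simp only [Finset.mem_filter, Finset.mem_univ, true_and, Finset.mem_insert,
        Finset.mem_singleton, hi0, hi1, Fin.ext_iff]
      omega
    have hsplit : ∀ f : Fin s → ℝ, ∑ i, f i
        = f i0 + f i1 + ∑ i ∈ Finset.univ.filter (fun i : Fin s => ¬ i.val < 2), f i := by
      intro f
      rw [← Finset.sum_filter_add_sum_filter_not Finset.univ (fun i : Fin s => i.val < 2) f,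
        hfilter, Finset.sum_insert (by simp [hi0, hi1, Fin.ext_iff]), Finset.sum_singleton]
    set Q : ℝ := ∑ i ∈ Finset.univ.filter (fun i : Fin s => ¬ i.val < 2), m i with hQ
    set R : ℝ := ∑ i ∈ Finset.univ.filter (fun i : Fin s => ¬ i.val < 2), (m i)^2 with hR
    have hmem2 : ∀ i ∈ Finset.univ.filter (fun i : Fin s => ¬ i.val < 2), m i ≤ m i2 := by
      intro i hi
      simp only [Finset.mem_filter, Finset.mem_univ, true_and, not_lt] at hi
      exact hmono i2 i (by rw [hi2, Fin.le_def]; exact hi)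
    have hRQ : R ≤ m i2 * Q := by
      rw [hR, hQ, Finset.mul_sum]
      refine Finset.sum_le_sum fun i hi => ?_
      have h1' := hmem2 i hi
      nlinarith [hnn i]
    have e1 : Q = 9 * t - m i0 - m i1 := by
      have := hsplit m
      rw [← h2, hd3] at this
      linarith
    have e2 : R = 9 * t^2 - (m i0)^2 - (m i1)^2 := by
      have := hsplit (fun i => (m i)^2)
      rw [← h1, hd3] at this
      nlinarith [this]
    have hm10 : m i1 ≤ m i0 := hmono i0 i1 (by rw [hi0, hi1]; exact Fin.mk_le_mk.2 (by omega))
    have hm21 : m i2 ≤ m i1 := hmono i1 i2 (by rw [hi1, hi2]; exact Fin.mk_le_mk.2 (by omega))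
    -- key: m i0 ≤ t
    have hQc : m i2 = 0 → Q ≤ 0 := by
      intro hc0
      rw [hQ]
      refine Finset.sum_nonpos fun i hi => ?_
      have := hmem2 i hi
      linarith
    have hm0t : m i0 ≤ t :=
      aux_key t (m i0) (m i1) (m i2) Q R htpos hm10 hm21 (hnn i2) (hnn i1)
        (by linarith) hRQ e1 e2 hQc
    have hallt : ∀ i, m i ≤ t :=
      fun i => le_trans (hmono i0 i (by simp only [hi0, Fin.le_def, Fin.val_mk]; omega)) hm0t
    -- each m i ∈ {0, t}
    have hsum0 : ∑ i, m i * (t - m i) = 0 := by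
      have hterm : ∀ i : Fin s, m i * (t - m i) = t * m i - (m i)^2 := fun i => by ring
      rw [Finset.sum_congr rfl (fun i _ => hterm i), Finset.sum_sub_distrib,
        ← Finset.mul_sum, ← h2, ← h1, hd3]
      ring
    have hzero : ∀ i : Fin s, m i = 0 ∨ m i = t := by
      intro i
      have hz := (Finset.sum_eq_zero_iff_of_nonneg
        (fun i _ => mul_nonneg (hnn i) (by linarith [hallt i]))).1 hsum0 i (Finset.mem_univ i)
      rcases mul_eq_zero.1 hz with h | h
      · exact Or.inl h
      · exact Or.inr (by linarith)
    have hm8 : m ⟨8, h8s⟩ = t := by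
      rcases hzero ⟨8, h8s⟩ with h8 | h8
      · exfalso
        have hbound : ∀ i : Fin s, m i ≤ (if i.val < 8 then t else 0) := by
          intro i
          by_cases hi : i.val < 8
          · rw [if_pos hi]; exact hallt i
          · rw [if_neg hi]
            have := hmono ⟨8, h8s⟩ i (by simp only [Fin.le_def, Fin.val_mk]; omega)
            linarith
        have := Finset.sum_le_sum (fun i (_ : i ∈ Finset.univ) => hbound i)
        rw [← h2, aux_sum_ite s 8 (by omega) t, hd3] at this
        norm_num at this
        linarith
      · exact h8
    refine ⟨t, le_of_lt htpos, hd3, fun i => ?_⟩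
    by_cases hi : i.val < 9
    · rw [if_pos hi]
      refine le_antisymm (hallt i) ?_
      have := hmono i ⟨8, h8s⟩ (by simp only [Fin.le_def, Fin.val_mk]; omega)
      linarith [hm8]
    · rw [if_neg hi]
      have h9 : 9 ≤ i.val := by omega
      have h9s : 9 < s := lt_of_le_of_lt h9 i.isLt
      have hm9 : m ⟨9, h9s⟩ = 0 := by
        rcases hzero ⟨9, h9s⟩ with h9' | h9'
        · exact h9'
        · exfalso
          have hbound : ∀ j : Fin s, (if j.val < 10 then t else 0) ≤ m j := by
            intro j
            by_cases hj : j.val < 10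
            · rw [if_pos hj]
              have := hmono j ⟨9, h9s⟩ (by simp only [Fin.le_def, Fin.val_mk]; omega)
              linarith
            · rw [if_neg hj]; exact hnn j
          have := Finset.sum_le_sum (fun j (_ : j ∈ Finset.univ) => hbound j)
          rw [← h2, aux_sum_ite s 10 (by omega) t, hd3] at this
          norm_num at this
          linarith
      have := hmono ⟨9, h9s⟩ i (by simp only [Fin.le_def, Fin.val_mk]; omega)
      exact le_antisymm (by linarith) (hnn i)
end

section
/- Let A ∈ (0,1] and suppose m4 is a real number with (3 - A)/(s - 3) ≤ m4 ≤ A/3 (where s ≥ 9 is an integer) and A² - (5A - 3)·m4 + 6·m4² ≥ 1. Then A = 1 and m4 = 1/3. -/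
/-- Quadratic inequality analysis: if A ∈ (0,1], s ≥ 9, (3-A)/(s-3) ≤ m4 ≤ A/3
and A² - (5A-3)m4 + 6m4² ≥ 1, then A = 1 and m4 = 1/3. -/
theorem stmt_5 (s : ℕ) (hs : 9 ≤ s) (A m4 : ℝ) (hA0 : 0 < A) (hA1 : A ≤ 1)
    (hlo : (3 - A) / ((s : ℝ) - 3) ≤ m4) (hhi : m4 ≤ A / 3)
    (hq : 1 ≤ A ^ 2 - (5 * A - 3) * m4 + 6 * m4 ^ 2) :
    A = 1 ∧ m4 = 1 / 3 := by
  have hs9 : (9 : ℝ) ≤ (s : ℝ) := by exact_mod_cast hs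
  have hden : (0 : ℝ) < (s : ℝ) - 3 := by linarith
  have hm4pos : 0 < m4 := lt_of_lt_of_le (div_pos (by linarith) hden) hlo
  have hprod : 6 * ((m4 - A / 3) * (m4 - (A - 1) / 2)) ≤ 0 := by
    have h1 : m4 - A / 3 ≤ 0 := by linarith
    have h2 : 0 ≤ m4 - (A - 1) / 2 := by linarith
    nlinarith [mul_nonpos_of_nonpos_of_nonneg h1 h2]
  have hAeq : A = 1 := by nlinarith
  subst hAeq
  refine ⟨rfl, ?_⟩
  nlinarith
end
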